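/- Every basic word of ω is a reduced word of ω; i.e., every element of Basic(ω) represents ω and has length l(ω). -/

import Mathlib

/-!
Every passage step is a product of commutations `sᵢsⱼ = sⱼsᵢ` (`|i - j| ≥ 2`) and of at most one
long braid move `b · [m, …, n] = [m, …, n] · (b - 1)` through a tower word `[m, …, n]` with
`m < b ≤ n`. Hence a passage word of `β` through `α` represents the same permutation as `βα` and
has the same length. Basic words are iterated passage words of the tower factors of the natural
word `η`, so each one is equivalent in this sense to `η`, which is reduced.
-/

/-- The adjacent transposition `sᵢ = (i, i+1)` as a permutation of `ℕ`. -/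
def sGen (i : ℕ) : Equiv.Perm ℕ := Equiv.swap i (i + 1)

/-- The permutation represented by a word. -/
def toPerm (w : List ℕ) : Equiv.Perm ℕ := (w.map sGen).prod

/-- A word is reduced (of minimal length among words representing the same permutation). -/
def IsReducedWord (w : List ℕ) : Prop := ∀ v : List ℕ, toPerm v = toPerm w → w.length ≤ v.length

/-- `w` is a reduced word for the permutation `ω`. -/
def IsReducedWordOf (w : List ℕ) (ω : Equiv.Perm ℕ) : Prop :=
  toPerm w = ω ∧ ∀ v : List ℕ, toPerm v = ω → w.length ≤ v.length

/-- The relation `<₁`: `β` is obtained from `α` by swapping two adjacent letters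
`x, y` with `y ≥ x + 2` (the smaller letter moves right). -/
def Rel1 (α β : List ℕ) : Prop :=
  ∃ (p q : List ℕ) (x y : ℕ), x + 2 ≤ y ∧
    α = p ++ x :: y :: q ∧ β = p ++ y :: x :: q

/-- Lexicographic order (non-strict) on words. -/
def LexLe (α β : List ℕ) : Prop := α = β ∨ List.Lex (· < ·) α β

/-- A tower word: a nonempty increasing run of consecutive integers. -/
def IsTowerWord (a : List ℕ) : Prop := a ≠ [] ∧ a.Chain' (fun x y => y = x + 1)

/-- First letter of a tower word. -/
def inn (a : List ℕ) : ℕ := a.headI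

/-- Last letter of a tower word. -/
def fin' (a : List ℕ) : ℕ := a.getLastD 0

/-- `L` is the tower decomposition of `w`: a factorization into maximal tower words. -/
def IsTowerDecomp (w : List ℕ) (L : List (List ℕ)) : Prop :=
  L.flatten = w ∧ (∀ a ∈ L, IsTowerWord a) ∧
    L.Chain' (fun a b => inn b ≠ fin' a + 1)

/-- The relation `<₂`: a directed long-braid move of a tower word past its left neighbour. -/
def Rel2 (α β : List ℕ) : Prop :=
  ∃ (A B : List (List ℕ)) (a b b1 b2 : List ℕ),
    IsTowerDecomp α (A ++ a :: b :: B) ∧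
    inn a ≤ inn b ∧ inn b < fin' b ∧ fin' b < fin' a ∧
    IsTowerWord b1 ∧ (b2 = [] ∨ IsTowerWord b2) ∧ b1 ++ b2 = b ∧
    β = A.flatten ++ (b1.map (· + 1)) ++ a ++ b2 ++ B.flatten

/-- The directed-braid order: reflexive-transitive closure of `<₁ ∪ <₂`. -/
def DBraid : List ℕ → List ℕ → Prop :=
  Relation.ReflTransGen (fun α β => Rel1 α β ∨ Rel2 α β)

/-- The natural word of `ω`: the reduced word whose tower decomposition has
strictly decreasing initial letters. -/
def IsNaturalWordOf (η : List ℕ) (ω : Equiv.Perm ℕ) : Prop :=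
  IsReducedWordOf η ω ∧ ∃ L, IsTowerDecomp η L ∧ L.Chain' (fun a b => inn b < inn a)

/-- A natural basic word of `ω`: a reduced word whose tower decomposition satisfies
`fin(aᵢ) > in(aᵢ₊₁)` for all `i`. -/
def IsNaturalBasicOf (β : List ℕ) (ω : Equiv.Perm ℕ) : Prop :=
  IsReducedWordOf β ω ∧ ∃ L, IsTowerDecomp β L ∧ L.Chain' (fun a b => inn b < fin' a)

/-- One step of the track of a letter `b` through a tower word `a`. -/
def trackStep (a : List ℕ) (b : ℕ) : Option ℕ :=
  if inn a < b ∧ b ≤ fin' a then some (b - 1)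
  else if b + 2 ≤ inn a ∨ fin' a + 2 ≤ b then some b
  else none

/-- The track sequence of `b` through a list of tower words. -/
def trackSeq : ℕ → List (List ℕ) → List ℕ
  | b, [] => [b]
  | b, a :: rest =>
    match trackStep a b with
    | none => [b]
    | some b' => b :: trackSeq b' rest

/-- The tower decomposition of a word, as a function. -/
def towerDecomp : List ℕ → List (List ℕ)
  | [] => []
  | x :: xs =>
    match towerDecomp xs with
    | [] => [[x]]
    | t :: ts => if t.headI = x + 1 then (x :: t) :: ts else [x] :: t :: ts

open Classical in
/-- The set of passage words of a single letter `b` through a word α. -/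
noncomputable def passOne (b : ℕ) (α : List ℕ) : Set (List ℕ) :=
  if IsReducedWord (b :: α) then
    { w | ∃ i < (trackSeq b (towerDecomp α)).length,
        w = ((towerDecomp α).take i).flatten ++
          (trackSeq b (towerDecomp α)).getD i 0 :: ((towerDecomp α).drop i).flatten }
  else ∅

/-- Passage words of a word through a word, letter by letter from the right
(first argument is the word β reversed). -/
def passAux : List ℕ → List ℕ → Set (List ℕ)
  | [], α => {α}
  | b :: rest, α => ⋃ α' ∈ passOne b α, passAux rest α'

/-- The set of passage words of β through α. -/
def passWords (β α : List ℕ) : Set (List ℕ) := passAux β.reverse α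

/-- `[B, A]`: all passage words of elements of B through elements of A. -/
def bracket (B A : Set (List ℕ)) : Set (List ℕ) :=
  ⋃ β ∈ B, ⋃ α ∈ A, passWords β α

/-- The set of basic words obtained from a word η with tower decomposition
η₁ … η_k, namely `[[…[[{η₁},{η₂}],{η₃}],…],{η_k}]`. -/
def BasicOf (η : List ℕ) : Set (List ℕ) :=
  match towerDecomp η with
  | [] => {([] : List ℕ)}
  | t :: ts => ts.foldl (fun S a => bracket S {a}) {t}

@[simp] lemma toPerm_nil : toPerm [] = 1 := rfl

@[simp] lemma toPerm_cons (b : ℕ) (w : List ℕ) : toPerm (b :: w) = sGen b * toPerm w := by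
  simp [toPerm]

@[simp] lemma toPerm_append (u v : List ℕ) : toPerm (u ++ v) = toPerm u * toPerm v := by
  simp [toPerm]

lemma sGen_mul_comm {a b : ℕ} (h : a + 2 ≤ b) : sGen a * sGen b = sGen b * sGen a := by
  ext x
  simp only [sGen, Equiv.Perm.mul_apply, Equiv.swap_apply_def]
  split_ifs <;> omega

lemma sGen_braid (a : ℕ) :
    sGen a * sGen (a + 1) * sGen a = sGen (a + 1) * sGen a * sGen (a + 1) := by
  ext x
  simp only [sGen, Equiv.Perm.mul_apply, Equiv.swap_apply_def]
  split_ifs <;> omega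

lemma toPerm_cons_eq_append_singleton {b : ℕ} {w : List ℕ}
    (h : ∀ j ∈ w, b + 2 ≤ j ∨ j + 2 ≤ b) : toPerm (b :: w) = toPerm (w ++ [b]) := by
  induction w with
  | nil => rfl
  | cons x xs ih =>
    have hcomm : sGen b * sGen x = sGen x * sGen b := by
      rcases h x List.mem_cons_self with hx | hx
      · exact sGen_mul_comm hx
      · exact (sGen_mul_comm hx).symm
    have hxs := ih fun j hj => h j (List.mem_cons_of_mem x hj)
    simp only [toPerm_cons, toPerm_append, List.cons_append, toPerm_nil,
      mul_one] at hxs ⊢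
    rw [← mul_assoc, hcomm, mul_assoc, hxs]

lemma toPerm_cons_range' {b m n : ℕ} (hm : m < b) (hn : b < m + n) :
    toPerm (b :: List.range' m n) = toPerm (List.range' m n ++ [b - 1]) := by
  induction n generalizing m with
  | zero => omega
  | succ n ih =>
    rw [List.range'_succ]
    obtain rfl | hb := eq_or_ne b (m + 1)
    · obtain ⟨k, rfl⟩ : ∃ k, n = k + 1 := Nat.exists_eq_succ_of_ne_zero (by omega)
      have hfar : toPerm (m :: List.range' (m + 2) k) = toPerm (List.range' (m + 2) k ++ [m]) :=
        toPerm_cons_eq_append_singleton fun j hj => Or.inl (List.mem_range'_1.mp hj).1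
      rw [List.range'_succ, Nat.add_sub_cancel]
      calc toPerm ((m + 1) :: m :: (m + 1) :: List.range' (m + 1 + 1) k)
          = sGen (m + 1) * sGen m * sGen (m + 1) * toPerm (List.range' (m + 2) k) := by
            simp only [toPerm_cons, mul_assoc]
        _ = sGen m * sGen (m + 1) * toPerm (m :: List.range' (m + 2) k) := by
            rw [← sGen_braid, toPerm_cons]; group
        _ = toPerm (m :: (m + 1) :: List.range' (m + 1 + 1) k ++ [m]) := by
            rw [hfar]; simp only [toPerm_cons, toPerm_append, List.cons_append, mul_assoc]
    · have hcomm : sGen b * sGen m = sGen m * sGen b := (sGen_mul_comm (by omega)).symm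
      have hrest := ih (m := m + 1) (by omega) (by omega)
      simp only [toPerm_cons, toPerm_append, List.cons_append, toPerm_nil,
        mul_one] at hrest ⊢
      rw [← mul_assoc, hcomm, mul_assoc, hrest]

lemma IsTowerWord.exists_eq_range' {a : List ℕ} (ha : IsTowerWord a) :
    ∃ m n, a = List.range' m (n + 1) := by
  obtain ⟨hne, hchain⟩ := ha
  induction a with
  | nil => exact absurd rfl hne
  | cons x t ih =>
    cases t with
    | nil => exact ⟨x, 0, rfl⟩
    | cons y t =>
      obtain ⟨rfl, hchain⟩ := List.isChain_cons_cons.mp hchain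
      obtain ⟨m, n, hyt⟩ := ih (List.cons_ne_nil _ _) hchain
      obtain rfl : x + 1 = m := by rw [List.range'_succ] at hyt; exact (List.cons.inj hyt).1
      exact ⟨x, n + 1, by rw [hyt, List.range'_succ (n := n + 1)]⟩

@[simp] lemma inn_range' (m n : ℕ) : inn (List.range' m (n + 1)) = m := rfl

@[simp] lemma fin'_range' (m n : ℕ) : fin' (List.range' m (n + 1)) = m + n := by
  simp [fin', List.getLastD_eq_getLast?, List.getLast?_range']

def SamePermLength (w v : List ℕ) : Prop := toPerm w = toPerm v ∧ w.length = v.length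

namespace SamePermLength

lemma refl (w : List ℕ) : SamePermLength w w := ⟨rfl, rfl⟩

lemma trans {u v w : List ℕ} (h₁ : SamePermLength u v) (h₂ : SamePermLength v w) :
    SamePermLength u w :=
  ⟨h₁.1.trans h₂.1, h₁.2.trans h₂.2⟩

lemma append_left {v w : List ℕ} (u : List ℕ) (h : SamePermLength v w) :
    SamePermLength (u ++ v) (u ++ w) := by
  simp [SamePermLength, h.1, h.2]

lemma append_right {v w : List ℕ} (h : SamePermLength v w) (u : List ℕ) :
    SamePermLength (v ++ u) (w ++ u) := by
  simp [SamePermLength, h.1, h.2]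

end SamePermLength

lemma IsReducedWordOf.of_samePermLength {v w : List ℕ} {ω : Equiv.Perm ℕ}
    (hv : IsReducedWordOf v ω) (h : SamePermLength w v) : IsReducedWordOf w ω :=
  ⟨h.1.trans hv.1, fun u hu => h.2 ▸ hv.2 u hu⟩

lemma IsTowerWord.toPerm_cons_of_trackStep {a : List ℕ} {b b' : ℕ} (ha : IsTowerWord a)
    (h : trackStep a b = some b') : toPerm (b :: a) = toPerm (a ++ [b']) := by
  obtain ⟨m, n, rfl⟩ := ha.exists_eq_range'
  simp only [trackStep, inn_range', fin'_range'] at h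
  split_ifs at h with hpass <;> cases h
  · exact toPerm_cons_range' hpass.1 (by omega)
  · exact toPerm_cons_eq_append_singleton fun j hj => by
      have := List.mem_range'_1.mp hj
      omega

lemma IsTowerWord.samePermLength_of_trackStep {a : List ℕ} {b b' : ℕ} (ha : IsTowerWord a)
    (h : trackStep a b = some b') (w : List ℕ) :
    SamePermLength (a ++ b' :: w) (b :: (a ++ w)) := by
  have hpass : SamePermLength (a ++ [b']) (b :: a) :=
    ⟨(ha.toPerm_cons_of_trackStep h).symm, by simp⟩
  simpa using hpass.append_right w

lemma samePermLength_trackSeq {L : List (List ℕ)} (hL : ∀ a ∈ L, IsTowerWord a) (b : ℕ)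
    {i : ℕ} (hi : i < (trackSeq b L).length) :
    SamePermLength ((L.take i).flatten ++ (trackSeq b L).getD i 0 :: (L.drop i).flatten)
      (b :: L.flatten) := by
  induction L generalizing b i with
  | nil =>
    obtain rfl : i = 0 := by simpa [trackSeq] using hi
    exact .refl _
  | cons a rest ih =>
    cases hstep : trackStep a b with
    | none =>
      obtain rfl : i = 0 := by simpa [trackSeq, hstep] using hi
      simpa [trackSeq, hstep] using .refl _
    | some b' =>
      cases i with
      | zero => simpa [trackSeq, hstep] using .refl _
      | succ i =>
        simp only [trackSeq, hstep, List.length_cons, Nat.add_lt_add_iff_right] at hi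
        have hrest := ih (fun x hx => hL x (List.mem_cons_of_mem a hx)) b' hi
        have hpass := (hL a List.mem_cons_self).samePermLength_of_trackStep hstep rest.flatten
        simp only [trackSeq, hstep, List.take_succ_cons, List.drop_succ_cons, List.flatten_cons,
          List.getD_cons_succ, List.append_assoc]
        exact (hrest.append_left a).trans hpass

lemma towerDecomp_flatten (w : List ℕ) : (towerDecomp w).flatten = w := by
  induction w with
  | nil => rfl
  | cons x xs ih =>
    unfold towerDecomp
    rcases h : towerDecomp xs with _ | ⟨t, ts⟩ <;> rw [h] at ih
    · simp [← ih]
    · dsimp only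
      split_ifs <;> simp [← ih]

lemma isTowerWord_of_mem_towerDecomp (w : List ℕ) : ∀ a ∈ towerDecomp w, IsTowerWord a := by
  induction w with
  | nil => simp [towerDecomp]
  | cons x xs ih =>
    have hsingle : IsTowerWord [x] := ⟨List.cons_ne_nil _ _, List.isChain_singleton x⟩
    unfold towerDecomp
    rcases h : towerDecomp xs with _ | ⟨t, ts⟩ <;> rw [h] at ih
    · simpa using hsingle
    · dsimp only
      split_ifs with ht
      · obtain ⟨hne, hchain⟩ := ih t List.mem_cons_self
        obtain ⟨y, t, rfl⟩ := List.exists_cons_of_ne_nil hne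
        refine List.forall_mem_cons.mpr ⟨⟨List.cons_ne_nil _ _, ?_⟩, fun a ha => ih a ?_⟩
        · exact List.isChain_cons_cons.mpr ⟨ht, hchain⟩
        · exact List.mem_cons_of_mem _ ha
      · exact List.forall_mem_cons.mpr ⟨hsingle, ih⟩

lemma samePermLength_of_mem_passOne {b : ℕ} {α w : List ℕ} (h : w ∈ passOne b α) :
    SamePermLength w (b :: α) := by
  unfold passOne at h
  split_ifs at h
  · obtain ⟨i, hi, rfl⟩ := h
    simpa [towerDecomp_flatten] using
      samePermLength_trackSeq (isTowerWord_of_mem_towerDecomp α) b hi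
  · exact absurd h (Set.notMem_empty w)

lemma samePermLength_of_mem_passAux (r : List ℕ) {α w : List ℕ} (h : w ∈ passAux r α) :
    SamePermLength w (r.reverse ++ α) := by
  induction r generalizing α with
  | nil =>
    rw [passAux, Set.mem_singleton_iff] at h
    exact h ▸ .refl _
  | cons b rest ih =>
    simp only [passAux, Set.mem_iUnion] at h
    obtain ⟨α', hα', hw⟩ := h
    simpa using (ih hw).trans ((samePermLength_of_mem_passOne hα').append_left rest.reverse)

lemma samePermLength_of_mem_passWords {β α w : List ℕ} (h : w ∈ passWords β α) :
    SamePermLength w (β ++ α) := by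
  simpa using samePermLength_of_mem_passAux β.reverse h

lemma samePermLength_of_mem_foldl_bracket (ts : List (List ℕ)) {S : Set (List ℕ)} {u : List ℕ}
    (hS : ∀ β ∈ S, SamePermLength β u) :
    ∀ w ∈ ts.foldl (fun S a => bracket S {a}) S, SamePermLength w (u ++ ts.flatten) := by
  induction ts generalizing S u with
  | nil => simpa using hS
  | cons a rest ih =>
    have hbracket : ∀ w ∈ bracket S {a}, SamePermLength w (u ++ a) := by
      simp only [bracket, Set.mem_iUnion, Set.mem_singleton_iff]
      rintro w ⟨β, hβ, α, hα, hw⟩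
      rw [hα] at hw
      exact (samePermLength_of_mem_passWords hw).trans ((hS β hβ).append_right a)
    simpa using ih hbracket

lemma samePermLength_of_mem_basicOf {η w : List ℕ} (hw : w ∈ BasicOf η) :
    SamePermLength w η := by
  have hflat := towerDecomp_flatten η
  unfold BasicOf at hw
  rcases h : towerDecomp η with _ | ⟨t, ts⟩ <;> rw [h] at hw hflat
  · rw [Set.mem_singleton_iff.mp hw, ← hflat]
    exact .refl _
  · rw [← hflat]
    exact samePermLength_of_mem_foldl_bracket ts (fun β hβ => hβ ▸ .refl t) w hw

/-- every basic word of ω is a reduced word of ω. -/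
theorem basic_words_reduced (ω : Equiv.Perm ℕ) (η : List ℕ)
    (hη : IsNaturalWordOf η ω) :
    ∀ w ∈ BasicOf η, IsReducedWordOf w ω :=
  fun _ hw => hη.1.of_samePermLength (samePermLength_of_mem_basicOf hw)
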